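/- Let k ≥ 1 and n ≥ 1 be integers. The multiple qt-Catalan number at the rectangular partition k̄ = (k, …, k) (n copies), defined by C_{k̄} = [∏_{i=1}^n (1 − q t^{n−i})/(1 − q^{k+1} t^{n−i})] · ∏_{i=1}^n (q^{1+k} t^{n−i}; q)_k / (q t^{n−i}; q)_k, satisfies C_{k̄} = ∏_{i=1}^n (q^{2+k} t^{n−i}; q)_{k−1} / (q^2 t^{n−i}; q)_{k−1}. In particular, C_{1̄} = 1 for every n. -/

import Mathlib

open Finset

noncomputable section

/-- Finite q-Pochhammer symbol `(a; q)_m = ∏_{j=0}^{m-1} (1 - a q^j)`, `(a;q)_0 = 1`. -/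
def qPoch (a q : ℂ) (m : ℕ) : ℂ := ∏ j ∈ Finset.range m, (1 - a * q ^ j)

/-- Multiple qt-Catalan number at the rectangular partition `k̄ = (k, …, k)` (n copies):
`C_{k̄} = [∏_{i=1}^n (1 - q t^{n-i})/(1 - q^{k+1} t^{n-i})]
          · ∏_{i=1}^n (q^{1+k} t^{n-i}; q)_k / (q t^{n-i}; q)_k`
(0-based `i`, so `t^{n-i}` is `t^{n-1-i}`). -/
def catalanRect (n k : ℕ) (q t : ℂ) : ℂ :=
  (∏ i : Fin n, (1 - q * t ^ (n - 1 - (i : ℕ))) / (1 - q ^ (k + 1) * t ^ (n - 1 - (i : ℕ)))) *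
    ∏ i : Fin n, qPoch (q ^ (1 + k) * t ^ (n - 1 - (i : ℕ))) q k /
      qPoch (q * t ^ (n - 1 - (i : ℕ))) q k

@[simp]
lemma qPoch_zero (a q : ℂ) : qPoch a q 0 = 1 := by
  simp [qPoch]

lemma qPoch_succ (a q : ℂ) (m : ℕ) :
    qPoch a q (m + 1) = (1 - a) * qPoch (a * q) q m := by
  simp only [qPoch, prod_range_succ', pow_zero, mul_one, pow_succ', mul_assoc]
  ring

def catalanRectRow (k : ℕ) (q x : ℂ) : ℂ :=
  (1 - q * x) / (1 - q ^ (k + 1) * x) * (qPoch (q ^ (1 + k) * x) q k / qPoch (q * x) q k)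

lemma catalanRect_eq_prod_row (n k : ℕ) (q t : ℂ) :
    catalanRect n k q t = ∏ i : Fin n, catalanRectRow k q (t ^ (n - 1 - (i : ℕ))) := by
  rw [catalanRect, ← prod_mul_distrib]
  rfl

/-- Peeling the first factor off both Pochhammer symbols cancels the prefactor of the row. -/
lemma catalanRectRow_eq {k : ℕ} (hk : 1 ≤ k) {q x : ℂ} (hq : 1 - q * x ≠ 0)
    (hqk : 1 - q ^ (k + 1) * x ≠ 0) :
    catalanRectRow k q x = qPoch (q ^ (2 + k) * x) q (k - 1) / qPoch (q ^ 2 * x) q (k - 1) := by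
  obtain ⟨m, rfl⟩ := Nat.exists_eq_add_of_le' hk
  have hnum : qPoch (q ^ (1 + (m + 1)) * x) q (m + 1)
      = (1 - q ^ (m + 1 + 1) * x) * qPoch (q ^ (2 + (m + 1)) * x) q m := by
    rw [qPoch_succ]; ring_nf
  have hden : qPoch (q * x) q (m + 1) = (1 - q * x) * qPoch (q ^ 2 * x) q m := by
    rw [qPoch_succ]; ring_nf
  rw [catalanRectRow, hnum, hden, Nat.add_sub_cancel, div_mul_div_comm, ← mul_assoc, ← mul_assoc,
    mul_comm (1 - q ^ (m + 1 + 1) * x) (1 - q * x), mul_div_mul_left _ _ (mul_ne_zero hq hqk)]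

theorem catalanRect_eq_general (n k : ℕ) (hk : 1 ≤ k) (q t : ℂ)
    (h1 : ∀ i : Fin n, 1 - q ^ (k + 1) * t ^ (n - 1 - (i : ℕ)) ≠ 0)
    (h4 : ∀ i : Fin n, 1 - q ^ 2 * t ^ (n - 1 - (i : ℕ)) ≠ 0)
    (h5 : ∀ i : Fin n, 1 - q * t ^ (n - 1 - (i : ℕ)) ≠ 0) :
    catalanRect n k q t =
        (∏ i : Fin n, qPoch (q ^ (2 + k) * t ^ (n - 1 - (i : ℕ))) q (k - 1) /
          qPoch (q ^ 2 * t ^ (n - 1 - (i : ℕ))) q (k - 1)) ∧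
      catalanRect n 1 q t = 1 := by
  refine ⟨?_, ?_⟩ <;> rw [catalanRect_eq_prod_row]
  · exact prod_congr rfl fun i _ => catalanRectRow_eq hk (h5 i) (h1 i)
  · refine prod_eq_one fun i _ => ?_
    rw [catalanRectRow_eq le_rfl (h5 i) (h4 i)]
    simp

/-- `C_{k̄} = ∏_{i=1}^n (q^{2+k} t^{n-i}; q)_{k-1} / (q^2 t^{n-i}; q)_{k-1}`,
and in particular `C_{1̄} = 1` for every `n`. -/
theorem catalanRect_eq (n k : ℕ) (hn : 1 ≤ n) (hk : 1 ≤ k) (q t : ℂ)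
    (h1 : ∀ i : Fin n, 1 - q ^ (k + 1) * t ^ (n - 1 - (i : ℕ)) ≠ 0)
    (h2 : ∀ i : Fin n, qPoch (q * t ^ (n - 1 - (i : ℕ))) q k ≠ 0)
    (h3 : ∀ i : Fin n, qPoch (q ^ 2 * t ^ (n - 1 - (i : ℕ))) q (k - 1) ≠ 0)
    (h4 : ∀ i : Fin n, 1 - q ^ 2 * t ^ (n - 1 - (i : ℕ)) ≠ 0)
    (h5 : ∀ i : Fin n, 1 - q * t ^ (n - 1 - (i : ℕ)) ≠ 0) :
    catalanRect n k q t =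
        (∏ i : Fin n, qPoch (q ^ (2 + k) * t ^ (n - 1 - (i : ℕ))) q (k - 1) /
          qPoch (q ^ 2 * t ^ (n - 1 - (i : ℕ))) q (k - 1)) ∧
      catalanRect n 1 q t = 1 :=
  catalanRect_eq_general n k hk q t h1 h4 h5

end
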